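/- Let G be a connected P_4-free graph whose block-cut tree has diameter 2 (equivalently, G has exactly one cut vertex and at least two blocks). Then the unique cut vertex of G is adjacent to every other vertex of G. -/

import Mathlib

open Classical

variable {V : Type}

/-- Reachability within a vertex subset `s` of the graph `G`. -/
def ReachIn (G : SimpleGraph V) (s : Finset V) (u v : V) : Prop :=
  Relation.ReflTransGen (fun a b => a ∈ s ∧ b ∈ s ∧ G.Adj a b) u v

/-- The induced subgraph of `G` on `s` is (nonempty and) connected. -/
def ConnIn (G : SimpleGraph V) (s : Finset V) : Prop :=
  s.Nonempty ∧ ∀ u ∈ s, ∀ v ∈ s, ReachIn G s u v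

/-- The vertex set of the connected component of `v` in the induced subgraph on `s`. -/
noncomputable def compIn (G : SimpleGraph V) (s : Finset V) (v : V) : Finset V :=
  s.filter (fun u => ReachIn G s v u)

/-- Fuel-based recursion computing the treedepth of the induced subgraph of `G` on `s`
(correct whenever the fuel is at least `s.card`): treedepth of the null graph is `0`;
for a connected graph it is `1 + min_v td(G - v)`; otherwise the max over components. -/
noncomputable def tdAux (G : SimpleGraph V) : ℕ → Finset V → ℕ
  | 0, _ => 0
  | n+1, s =>
    if hs : s = ∅ then 0
    else if ConnIn G s then
      1 + s.inf' (Finset.nonempty_of_ne_empty hs) (fun v => tdAux G n (s.erase v))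
    else
      s.sup (fun v => tdAux G n (compIn G s v))

/-- The treedepth of the induced subgraph of `G` on the vertex set `s`. -/
noncomputable def tdOn (G : SimpleGraph V) (s : Finset V) : ℕ := tdAux G s.card s

/-- The treedepth of a finite graph. -/
noncomputable def td (G : SimpleGraph V) [Fintype V] : ℕ := tdOn G Finset.univ

/-- `B` induces a block-like graph: connected and with no cut vertex
(removing any vertex leaves it connected, when nonempty). -/
def IsBlockSet (G : SimpleGraph V) (B : Finset V) : Prop :=
  ConnIn G B ∧ ∀ v ∈ B, (B.erase v).Nonempty → ConnIn G (B.erase v)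

/-- `B` is a block of the induced subgraph of `G` on `s`: a maximal connected
subgraph without a cut vertex. -/
def IsBlock (G : SimpleGraph V) (s B : Finset V) : Prop :=
  B ⊆ s ∧ IsBlockSet G B ∧ ∀ B' : Finset V, B ⊆ B' → B' ⊆ s → IsBlockSet G B' → B' = B

/-- Fuel-based recursion computing the 2-treedepth of the induced subgraph of `G` on `s`
(correct whenever the fuel is at least `s.card`): `0` for the null graph;
`1 + min_v td₂(G - v)` if the graph is a block; the max over blocks otherwise. -/
noncomputable def td2Aux (G : SimpleGraph V) : ℕ → Finset V → ℕ
  | 0, _ => 0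
  | n+1, s =>
    if hs : s = ∅ then 0
    else if IsBlockSet G s then
      1 + s.inf' (Finset.nonempty_of_ne_empty hs) (fun v => td2Aux G n (s.erase v))
    else
      (s.powerset.filter (fun B => IsBlock G s B)).sup (fun B => td2Aux G n B)

/-- The 2-treedepth of the induced subgraph of `G` on `s`. -/
noncomputable def td2On (G : SimpleGraph V) (s : Finset V) : ℕ := td2Aux G s.card s

/-- The 2-treedepth of a finite graph. -/
noncomputable def td2 (G : SimpleGraph V) [Fintype V] : ℕ := td2On G Finset.univ

/-- `G` contains a path on `m` vertices as a subgraph. -/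
def HasPathOn (G : SimpleGraph V) (m : ℕ) : Prop :=
  ∃ p : Fin m → V, Function.Injective p ∧
    ∀ i : Fin m, ∀ h : i.1 + 1 < m, G.Adj (p i) (p ⟨i.1 + 1, h⟩)

/-- `G` contains an induced path on `m` vertices: `m` distinct vertices with
adjacency exactly between consecutive ones. -/
def HasInducedPathOn (G : SimpleGraph V) (m : ℕ) : Prop :=
  ∃ p : Fin m → V, Function.Injective p ∧
    ∀ i j : Fin m, G.Adj (p i) (p j) ↔ (i.1 + 1 = j.1 ∨ j.1 + 1 = i.1)

/-- `G` is `P_t`-free: it has no induced path on `t` vertices. -/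
def PtFree (G : SimpleGraph V) (t : ℕ) : Prop := ¬ HasInducedPathOn G t

/-- `v` is a cut vertex of the finite graph `G`: removing it disconnects two
vertices that were connected in `G`. -/
def IsCutVertex (G : SimpleGraph V) [Fintype V] (v : V) : Prop :=
  ∃ u w : V, u ≠ v ∧ w ≠ v ∧ ReachIn G Finset.univ u w ∧
    ¬ ReachIn G (Finset.univ.erase v) u w

/-- Vertices of the block-cut tree of `G`: blocks of `G` together with cut vertices of `G`. -/
def BCVert (G : SimpleGraph V) [Fintype V] : Type :=
  {B : Finset V // IsBlock G Finset.univ B} ⊕ {v : V // IsCutVertex G v}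

/-- The block-cut tree (forest of blocks) of `G`: a block `B` is adjacent to a
cut vertex `v` exactly when `v ∈ B`. -/
def bcTree (G : SimpleGraph V) [Fintype V] : SimpleGraph (BCVert G) where
  Adj x y := match x, y with
    | Sum.inl B, Sum.inr v => v.1 ∈ B.1
    | Sum.inr v, Sum.inl B => v.1 ∈ B.1
    | _, _ => False
  symm := ⟨by rintro (B|v) (B'|v') h <;> simp_all⟩
  loopless := ⟨by rintro (B|v) h <;> simp_all⟩

/-!
Let `u ≠ v` be a non-neighbour of the cut vertex `v`. Some vertex `t` lies in a different
component of `G - v` than `u`; connectivity gives a neighbour `w` of `v` in the component of `t`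
and a neighbour of `v` in the component of `u`. Walking inside the component of `u` from that
neighbour to `u`, we meet an edge `x y` with `x ∼ v` and `y ≁ v`. Then `w v x y` is an induced
`P_4`, because `w` has no neighbour in the component of `u`.
-/

open Finset

section ReachIn

variable {G : SimpleGraph V} {s : Finset V}

theorem ReachIn.symm {u w : V} (h : ReachIn G s u w) : ReachIn G s w u :=
  Relation.ReflTransGen.mono (fun _ _ ⟨ha, hb, hab⟩ => ⟨hb, ha, hab.symm⟩) _ _
    (Relation.ReflTransGen.swap _ _ h)

theorem reachIn_of_adj {a b : V} (ha : a ∈ s) (hb : b ∈ s) (hab : G.Adj a b) :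
    ReachIn G s a b :=
  Relation.ReflTransGen.single ⟨ha, hb, hab⟩

theorem ReachIn.exists_adj_of_not {P : V → Prop} {c u : V} (h : ReachIn G s c u)
    (hc : P c) (hu : ¬ P u) :
    ∃ x y, x ∈ s ∧ y ∈ s ∧ G.Adj x y ∧ P x ∧ ¬ P y ∧ ReachIn G s y u := by
  induction h using Relation.ReflTransGen.head_induction_on with
  | refl => exact absurd hc hu
  | @head a b hab hbu ih =>
    by_cases hb : P b
    · exact ih hb
    · exact ⟨a, b, hab.1, hab.2.1, hab.2.2, hc, hb, hbu⟩

end ReachIn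

theorem exists_adj_reachIn_erase [Fintype V] {G : SimpleGraph V} {x v : V}
    (hxv : G.Reachable x v) (hx : x ≠ v) :
    ∃ w, G.Adj v w ∧ ReachIn G (univ.erase v) w x := by
  obtain ⟨p⟩ := hxv
  induction p with
  | nil => exact absurd rfl hx
  | @cons a b c hab q ih =>
    by_cases hb : b = c
    · subst hb
      exact ⟨a, hab.symm, Relation.ReflTransGen.refl⟩
    · obtain ⟨w, hvw, hwb⟩ := ih hb
      exact ⟨w, hvw, hwb.tail ⟨by simpa using hb, by simpa using hx, hab.symm⟩⟩

theorem IsCutVertex.exists_not_reachIn [Fintype V] {G : SimpleGraph V} {v : V}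
    (hv : IsCutVertex G v) (u : V) : ∃ t, t ≠ v ∧ ¬ ReachIn G (univ.erase v) t u := by
  obtain ⟨a, b, ha, hb, -, hab⟩ := hv
  by_cases hau : ReachIn G (univ.erase v) a u
  · exact ⟨b, hb, fun hbu => hab (hau.trans hbu.symm)⟩
  · exact ⟨a, ha, hau⟩

theorem hasInducedPathOn_four {G : SimpleGraph V} {a b c d : V} (hab : G.Adj a b)
    (hbc : G.Adj b c) (hcd : G.Adj c d) (hac : ¬ G.Adj a c) (had : ¬ G.Adj a d)
    (hbd : ¬ G.Adj b d) : HasInducedPathOn G 4 := by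
  have hca : ¬ G.Adj c a := fun h => hac h.symm
  have hda : ¬ G.Adj d a := fun h => had h.symm
  have hdb : ¬ G.Adj d b := fun h => hbd h.symm
  refine ⟨![a, b, c, d], ?_, ?_⟩
  · -- distinctness is forced by the adjacency pattern
    have := hab.ne; have := hbc.ne; have := hcd.ne
    have : a ≠ c := by rintro rfl; exact had hcd
    have : b ≠ d := by rintro rfl; exact had hab
    have : a ≠ d := by rintro rfl; exact hbd hab.symm
    intro i j hij
    fin_cases i <;> fin_cases j <;> simp_all
  · intro i j
    fin_cases i <;> fin_cases j <;>
      simp [hab, hab.symm, hbc, hbc.symm, hcd, hcd.symm, hac, hca, had, hda, hbd, hdb]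

theorem p4free_cut_apex_general {V : Type} [Fintype V] (G : SimpleGraph V) (hconn : G.Connected)
    (hfree : PtFree G 4) (v : V) (hcut : IsCutVertex G v) :
    ∀ u : V, u ≠ v → G.Adj v u := by
  intro u hu
  by_contra hvu
  obtain ⟨t, htv, htu⟩ := hcut.exists_not_reachIn u
  obtain ⟨w, hvw, hwt⟩ := exists_adj_reachIn_erase (hconn.preconnected t v) htv
  obtain ⟨c, hvc, hcu⟩ := exists_adj_reachIn_erase (hconn.preconnected u v) hu
  obtain ⟨x, y, hx, hy, hxy, hvx, hvy, hyu⟩ :=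
    hcu.exists_adj_of_not (P := G.Adj v) hvc hvu
  have hw : w ∈ univ.erase v := by simpa using hvw.ne.symm
  have hwy : ¬ G.Adj w y := fun h =>
    htu (hwt.symm.trans ((reachIn_of_adj hw hy h).trans hyu))
  have hxu : ReachIn G (univ.erase v) x u := (reachIn_of_adj hx hy hxy).trans hyu
  have hwx : ¬ G.Adj w x := fun h => htu (hwt.symm.trans ((reachIn_of_adj hw hx h).trans hxu))
  exact hfree (hasInducedPathOn_four hvw.symm hvx hxy hwx hwy hvy)

theorem p4free_cut_apex {V : Type} [Fintype V] (G : SimpleGraph V) (hconn : G.Connected)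
    (hfree : PtFree G 4) (v : V) (hcut : IsCutVertex G v)
    (huniq : ∀ u : V, IsCutVertex G u → u = v)
    (htwo : ∃ B1 B2 : Finset V,
      IsBlock G Finset.univ B1 ∧ IsBlock G Finset.univ B2 ∧ B1 ≠ B2) :
    ∀ u : V, u ≠ v → G.Adj v u :=
  p4free_cut_apex_general G hconn hfree v hcut
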